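/- arXiv:2203.00722 — 5 statements merged into one kernel-verified Lean document; each statement's English description precedes it below -/
import Mathlib

section
/- Let a > 0, κ > 0, φ > 0 and C₀ > 0 be real constants, and define C : ℝ → ℝ by C(t) = (1/a)·log(1 − exp(−φ·a·κ·t)·(1 − exp(a·C₀))). Then C(0) = C₀ and, for every t ∈ ℝ, C is differentiable at t with derivative C'(t) = −φ·κ·(1 − exp(−a·C(t))). (This is Proposition 1: the closed-form solution of the photochemical state-switching ODE derived from the Beer–Lambert law.) -/
/-! The substitution `g = exp (a C)` turns the ODE into the linear relaxation `g' = φ a κ (1 - g)`,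
whose solution through `g 0 = exp (a C₀)` is `1 - exp (-φ a κ t) (1 - exp (a C₀))`; since `a C₀ > 0`
this stays positive, so `C = (1 / a) log g` is defined and differentiable for all `t`. -/

open Real

lemma hasDerivAt_one_sub_exp_neg_mul_mul (k D t : ℝ) :
    HasDerivAt (fun s => 1 - exp (-(k * s)) * D) (k * (1 - (1 - exp (-(k * t)) * D))) t := by
  have hlin : HasDerivAt (fun s => -(k * s)) (-k) t :=
    ((hasDerivAt_id t).const_mul k).neg.congr_deriv (by ring)
  exact ((hlin.exp.mul_const D).const_sub 1).congr_deriv (by ring)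

lemma one_sub_exp_mul_one_sub_exp_pos {x : ℝ} (hx : 0 ≤ x) (y : ℝ) :
    0 < 1 - exp y * (1 - exp x) := by
  have : 1 - exp x ≤ 0 := sub_nonpos.mpr (one_le_exp hx)
  nlinarith [exp_pos y]

lemma exp_neg_mul_inv_mul_log {a x : ℝ} (ha : a ≠ 0) (hx : 0 < x) :
    exp (-(a * ((1 / a) * log x))) = x⁻¹ := by
  rw [← mul_assoc, mul_one_div_cancel ha, one_mul, exp_neg, exp_log hx]

lemma hasDerivAt_inv_mul_log_of_relaxation {g : ℝ → ℝ} {a k t : ℝ} (ha : a ≠ 0)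
    (hg : HasDerivAt g (k * (1 - g t)) t) (hpos : 0 < g t) :
    HasDerivAt (fun s => (1 / a) * log (g s))
      (-(k / a * (1 - exp (-(a * ((1 / a) * log (g t))))))) t := by
  refine ((hg.log hpos.ne').const_mul (1 / a)).congr_deriv ?_
  rw [exp_neg_mul_inv_mul_log ha hpos]
  field_simp
  ring

theorem stmt_0_general (a κ φ C₀ : ℝ) (ha : 0 < a) (hC₀ : 0 < C₀)
    (C : ℝ → ℝ)
    (hC : ∀ t, C t = (1 / a) * Real.log (1 - Real.exp (-(φ * a * κ * t)) * (1 - Real.exp (a * C₀)))) :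
    C 0 = C₀ ∧ ∀ t : ℝ, HasDerivAt C (-(φ * κ * (1 - Real.exp (-(a * C t))))) t := by
  obtain rfl : C = fun t => (1 / a) * log (1 - exp (-(φ * a * κ * t)) * (1 - exp (a * C₀))) :=
    funext hC
  refine ⟨by simp [ha.ne'], fun t => ?_⟩
  have hpos := one_sub_exp_mul_one_sub_exp_pos (mul_pos ha hC₀).le (-(φ * a * κ * t))
  convert hasDerivAt_inv_mul_log_of_relaxation ha.ne'
    (hasDerivAt_one_sub_exp_neg_mul_mul (φ * a * κ) (1 - exp (a * C₀)) t) hpos using 3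
  field_simp

/-- Proposition 1: the closed-form solution of the photochemical state-switching
ODE derived from the Beer–Lambert law. -/
theorem stmt_0 (a κ φ C₀ : ℝ) (ha : 0 < a) (hκ : 0 < κ) (hφ : 0 < φ) (hC₀ : 0 < C₀)
    (C : ℝ → ℝ)
    (hC : ∀ t, C t = (1 / a) * Real.log (1 - Real.exp (-(φ * a * κ * t)) * (1 - Real.exp (a * C₀)))) :
    C 0 = C₀ ∧ ∀ t : ℝ, HasDerivAt C (-(φ * κ * (1 - Real.exp (-(a * C t))))) t :=
  stmt_0_general a κ φ C₀ ha hC₀ C hC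
end

section
/- Let a > 0, κ > 0, φ > 0 and C₀ > 0 be real constants, and define C : ℝ → ℝ by C(t) = (1/a)·log(1 − exp(−φ·a·κ·t)·(1 − exp(a·C₀))). Then C is strictly decreasing on [0, ∞), and 0 < C(t) ≤ C₀ for all t ≥ 0. Consequently, the switching probability p_s(t) = 1 − C(t)/C₀ satisfies 0 ≤ p_s(t) < 1 and is strictly increasing in t on [0, ∞). -/
/-- Monotonicity and bounds for the closed-form solution of the photochemical
switching ODE, and the corresponding properties of the switching probability
`p_s(t) = 1 - C(t)/C₀`. -/
theorem stmt_1 (a κ φ C₀ : ℝ) (ha : 0 < a) (hκ : 0 < κ) (hφ : 0 < φ) (hC₀ : 0 < C₀)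
    (C : ℝ → ℝ)
    (hC : ∀ t, C t = (1 / a) * Real.log (1 - Real.exp (-(φ * a * κ * t)) * (1 - Real.exp (a * C₀))))
    (ps : ℝ → ℝ) (hps : ∀ t, ps t = 1 - C t / C₀) :
    StrictAntiOn C (Set.Ici (0 : ℝ)) ∧
    (∀ t : ℝ, 0 ≤ t → 0 < C t ∧ C t ≤ C₀) ∧
    (∀ t : ℝ, 0 ≤ t → 0 ≤ ps t ∧ ps t < 1) ∧
    StrictMonoOn ps (Set.Ici (0 : ℝ)) := by
  have hE : 1 < Real.exp (a * C₀) := by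
    nlinarith [Real.add_one_le_exp (a * C₀), mul_pos ha hC₀]
  have hL : 0 < φ * a * κ := by positivity
  -- inner function
  set f : ℝ → ℝ := fun t => 1 - Real.exp (-(φ * a * κ * t)) * (1 - Real.exp (a * C₀)) with hf
  have hf1 : ∀ t : ℝ, 1 < f t := by
    intro t
    have h1 : 0 < Real.exp (-(φ * a * κ * t)) := Real.exp_pos _
    have : 0 < Real.exp (-(φ * a * κ * t)) * (Real.exp (a * C₀) - 1) :=
      mul_pos h1 (by linarith)
    simp only [hf]; nlinarith
  have hfle : ∀ t : ℝ, 0 ≤ t → f t ≤ Real.exp (a * C₀) := by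
    intro t ht
    have h1 : Real.exp (-(φ * a * κ * t)) ≤ 1 := by
      apply Real.exp_le_one_iff.mpr
      nlinarith
    have h2 : 0 < Real.exp (-(φ * a * κ * t)) := Real.exp_pos _
    simp only [hf]; nlinarith
  have hCpos : ∀ t : ℝ, 0 ≤ t → 0 < C t := by
    intro t ht
    rw [hC]
    have := Real.log_pos (hf1 t)
    positivity
  have hCle : ∀ t : ℝ, 0 ≤ t → C t ≤ C₀ := by
    intro t ht
    rw [hC]
    have h1 : Real.log (f t) ≤ a * C₀ := by
      calc Real.log (f t) ≤ Real.log (Real.exp (a * C₀)) :=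
            Real.log_le_log (by linarith [hf1 t]) (hfle t ht)
        _ = a * C₀ := Real.log_exp _
    calc (1 / a) * Real.log (f t) ≤ (1 / a) * (a * C₀) := by
          apply mul_le_mul_of_nonneg_left h1 (by positivity)
      _ = C₀ := by field_simp
  have hanti : StrictAntiOn C (Set.Ici (0 : ℝ)) := by
    intro s hs t ht hst
    rw [hC, hC]
    have hflt : f t < f s := by
      have : Real.exp (-(φ * a * κ * t)) < Real.exp (-(φ * a * κ * s)) := by
        apply Real.exp_lt_exp.mpr; nlinarith
      simp only [hf]; nlinarith
    have hlog : Real.log (f t) < Real.log (f s) :=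
      Real.log_lt_log (by linarith [hf1 t]) hflt
    exact mul_lt_mul_of_pos_left hlog (by positivity)
  refine ⟨hanti, fun t ht => ⟨hCpos t ht, hCle t ht⟩, ?_, ?_⟩
  · intro t ht
    rw [hps]
    have h1 := hCpos t ht
    have h2 := hCle t ht
    constructor
    · have : C t / C₀ ≤ 1 := (div_le_one hC₀).mpr h2
      linarith
    · have : 0 < C t / C₀ := div_pos h1 hC₀
      linarith
  · intro s hs t ht hst
    rw [hps, hps]
    have := hanti hs ht hst
    have h2 : C t / C₀ < C s / C₀ := by gcongr
    linarith
end

section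
/- Let D > 0, t > 0, v ∈ ℝ, and let z_a^TX < z_b^TX and z_a^RX < z_b^RX be real numbers with l_TX = z_b^TX − z_a^TX. Define a₀ = z_b^RX − z_a^TX − v·t, a₁ = z_b^RX − z_b^TX − v·t, a₂ = z_a^RX − z_b^TX − v·t, a₃ = z_a^RX − z_a^TX − v·t. Then (1/l_TX)·∫_{z_a^TX}^{z_b^TX} ∫_{z_a^RX}^{z_b^RX} (1/√(4πDt))·exp(−(z_r − z_m − v·t)²/(4Dt)) dz_r dz_m = (1/(2·l_TX))·Σ_{i=0}^{3} (−1)^i·[a_i·erf(a_i/√(4Dt)) + √(4Dt/π)·exp(−a_i²/(4Dt))]. (This is Proposition 3: the channel impulse response h₀(t) for a molecule uniformly distributed in the TX region at time 0.) -/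
/-- The Gaussian error function `erf(x) = (2/√π)·∫₀ˣ exp(−u²) du`. -/
noncomputable def erf (x : ℝ) : ℝ :=
  (2 / Real.sqrt Real.pi) * ∫ u in (0:ℝ)..x, Real.exp (-u ^ 2)

/-!
The inner integral of the Gaussian density over the receiver is a difference of two values of
`erf`. Averaging over the transmitter then integrates `erf` itself, whose antiderivative is
`x ↦ x erf x + exp(-x²)/√π`; evaluating it at the four differences `a₀, …, a₃` of endpoints of
the two intervals gives the alternating sum.
-/

open Real

lemma hasDerivAt_erf (x : ℝ) : HasDerivAt erf (2 / √π * exp (-x ^ 2)) x := by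
  have hc : Continuous fun u : ℝ => exp (-u ^ 2) := by fun_prop
  exact (intervalIntegral.integral_hasDerivAt_right (hc.intervalIntegrable 0 x)
    (hc.stronglyMeasurableAtFilter _ _) hc.continuousAt).const_mul _

lemma continuous_erf : Continuous erf :=
  continuous_iff_continuousAt.2 fun x => (hasDerivAt_erf x).continuousAt

noncomputable def erfAntideriv (x : ℝ) : ℝ :=
  x * erf x + exp (-x ^ 2) / √π

lemma hasDerivAt_erfAntideriv (x : ℝ) : HasDerivAt erfAntideriv (erf x) x := by
  have h := ((hasDerivAt_id x).mul (hasDerivAt_erf x)).add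
    ((hasDerivAt_pow 2 x).neg.exp.div_const √π)
  refine h.congr_deriv ?_
  simp only [id, Pi.neg_apply]
  field_simp
  ring

lemma integral_gaussian_interval {s : ℝ} (hs : s ≠ 0) (μ p q : ℝ) :
    ∫ x in p..q, 1 / (√π * s) * exp (-(x - μ) ^ 2 / s ^ 2) =
      (erf ((q - μ) / s) - erf ((p - μ) / s)) / 2 := by
  have hprim : ∀ x, HasDerivAt (fun x => erf ((x - μ) / s) / 2)
      (1 / (√π * s) * exp (-(x - μ) ^ 2 / s ^ 2)) x := fun x => by
    refine ((hasDerivAt_erf _).comp x (((hasDerivAt_id x).sub_const μ).div_const s)).div_const 2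
      |>.congr_deriv ?_
    simp only [id, div_pow, neg_div]
    field_simp
  rw [intervalIntegral.integral_eq_sub_of_hasDerivAt (fun x _ => hprim x)
    (Continuous.intervalIntegrable (by fun_prop) _ _), sub_div _ _ (2 : ℝ)]

lemma integral_erf_sub_sub_div {s : ℝ} (hs : s ≠ 0) (c w A B : ℝ) :
    ∫ y in A..B, erf ((c - y - w) / s) =
      s * (erfAntideriv ((c - A - w) / s) - erfAntideriv ((c - B - w) / s)) := by
  have hinner : ∀ y, HasDerivAt (fun y => (c - y - w) / s) (-1 / s) y := fun y => by
    simpa using ((hasDerivAt_id y).const_sub c).sub_const w |>.div_const s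
  have hprim : ∀ y, HasDerivAt (fun y => -s * erfAntideriv ((c - y - w) / s))
      (erf ((c - y - w) / s)) y := fun y => by
    refine ((hasDerivAt_erfAntideriv _).comp y (hinner y)).const_mul (-s) |>.congr_deriv ?_
    field_simp
  rw [intervalIntegral.integral_eq_sub_of_hasDerivAt (fun y _ => hprim y)
    ((continuous_erf.comp (by fun_prop)).intervalIntegrable _ _)]
  ring

lemma integral_integral_gaussian {s : ℝ} (hs : s ≠ 0) (w A B p q : ℝ) :
    ∫ y in A..B, ∫ x in p..q, 1 / (√π * s) * exp (-(x - y - w) ^ 2 / s ^ 2) =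
      s / 2 * (erfAntideriv ((q - A - w) / s) - erfAntideriv ((q - B - w) / s) +
        erfAntideriv ((p - B - w) / s) - erfAntideriv ((p - A - w) / s)) := by
  have hint : ∀ c, IntervalIntegrable (fun y => erf ((c - y - w) / s)) MeasureTheory.volume A B :=
    fun c => (continuous_erf.comp (by fun_prop)).intervalIntegrable _ _
  have hinner : ∀ y, ∫ x in p..q, 1 / (√π * s) * exp (-(x - y - w) ^ 2 / s ^ 2) =
      (erf ((q - y - w) / s) - erf ((p - y - w) / s)) / 2 := fun y => by
    simpa only [sub_sub] using integral_gaussian_interval hs (y + w) p q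
  rw [intervalIntegral.integral_congr fun y _ => hinner y, intervalIntegral.integral_div,
    intervalIntegral.integral_sub (hint q) (hint p), integral_erf_sub_sub_div hs,
    integral_erf_sub_sub_div hs]
  ring

lemma mul_erfAntideriv_div {s : ℝ} (hs : s ≠ 0) (x : ℝ) :
    s * erfAntideriv (x / s) = x * erf (x / s) + s / √π * exp (-x ^ 2 / s ^ 2) := by
  rw [erfAntideriv, div_pow, neg_div]
  field_simp

theorem stmt_5_general (D t v zaTX zbTX zaRX zbRX : ℝ) (hD : 0 < D) (ht : 0 < t)
    (lTX : ℝ)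
    (a : Fin 4 → ℝ)
    (ha : a = ![zbRX - zaTX - v * t, zbRX - zbTX - v * t,
                zaRX - zbTX - v * t, zaRX - zaTX - v * t]) :
    (1 / lTX) * ∫ zm in zaTX..zbTX, ∫ zr in zaRX..zbRX,
        (1 / Real.sqrt (4 * Real.pi * D * t)) *
          Real.exp (-(zr - zm - v * t) ^ 2 / (4 * D * t)) =
      (1 / (2 * lTX)) * ∑ i : Fin 4, (-1 : ℝ) ^ (i : ℕ) *
        (a i * erf (a i / Real.sqrt (4 * D * t)) +
          Real.sqrt (4 * D * t / Real.pi) * Real.exp (-(a i) ^ 2 / (4 * D * t))) := by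
  have h4Dt : 0 < 4 * D * t := by positivity
  rw [show 4 * π * D * t = π * (4 * D * t) by ring, sqrt_mul pi_pos.le, sqrt_div h4Dt.le]
  set s := √(4 * D * t)
  have hs : s ≠ 0 := (sqrt_pos.2 h4Dt).ne'
  have hs2 : 4 * D * t = s ^ 2 := (sq_sqrt h4Dt.le).symm
  clear_value s
  rw [hs2, integral_integral_gaussian hs, ha]
  simp only [Fin.sum_univ_four, Matrix.cons_val, ← mul_erfAntideriv_div hs]
  norm_num
  ring

/-- Proposition 3: the channel impulse response `h₀(t)` for a molecule uniformly
distributed in the TX region `[zaTX, zbTX]` at time 0, observed in the RX region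
`[zaRX, zbRX]` at time `t`. -/
theorem stmt_5 (D t v zaTX zbTX zaRX zbRX : ℝ) (hD : 0 < D) (ht : 0 < t)
    (hTX : zaTX < zbTX) (hRX : zaRX < zbRX)
    (lTX : ℝ) (hlTX : lTX = zbTX - zaTX)
    (a : Fin 4 → ℝ)
    (ha : a = ![zbRX - zaTX - v * t, zbRX - zbTX - v * t,
                zaRX - zbTX - v * t, zaRX - zaTX - v * t]) :
    (1 / lTX) * ∫ zm in zaTX..zbTX, ∫ zr in zaRX..zbRX,
        (1 / Real.sqrt (4 * Real.pi * D * t)) *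
          Real.exp (-(zr - zm - v * t) ^ 2 / (4 * D * t)) =
      (1 / (2 * lTX)) * ∑ i : Fin 4, (-1 : ℝ) ^ (i : ℕ) *
        (a i * erf (a i / Real.sqrt (4 * D * t)) +
          Real.sqrt (4 * D * t / Real.pi) * Real.exp (-(a i) ^ 2 / (4 * D * t))) :=
  stmt_5_general D t v zaTX zbTX zaRX zbRX hD ht lTX a ha
end

section
/- Let n : ℕ and let p, q ∈ [0,1] with the corresponding nonnegativity/boundedness hypotheses. Then the probability mass function obtained by first sampling F from the binomial distribution with n trials and success probability p, and then, given F = k, sampling G from the binomial distribution with k trials and success probability q, equals the binomial distribution with n trials and success probability p·q; i.e., (PMF.binomial p n).bind (fun k => PMF.binomial q k) = PMF.binomial (p·q) n. (This is Theorem 1 of the paper on doubly stochastic binomial processes.) -/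
/-!
Conditioning on `F = k`, the probability that `G = m` is
`∑ₖ C(n,k) pᵏ (1-p)ⁿ⁻ᵏ · C(k,m) qᵐ (1-q)ᵏ⁻ᵐ`. Only `k ≥ m` contributes, and the identity
`C(n, m+j) C(m+j, m) = C(n, m) C(n-m, j)` turns the sum over `k = m + j` into
`C(n,m) (pq)ᵐ ∑ⱼ C(n-m, j) (p(1-q))ʲ (1-p)ⁿ⁻ᵐ⁻ʲ = C(n,m) (pq)ᵐ (p(1-q) + (1-p))ⁿ⁻ᵐ`
by the binomial theorem, and `p(1-q) + (1-p) = 1 - pq`.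
-/

open scoped ENNReal

set_option linter.deprecated false

open Finset in
theorem sum_pow_mul_pow_mul_choose_mul_pow_mul_pow_mul_choose {R : Type*} [CommSemiring R]
    (a b c d : R) {n m : ℕ} (hm : m ≤ n) :
    ∑ k ∈ range (n + 1), a ^ k * b ^ (n - k) * n.choose k * (c ^ m * d ^ (k - m) * k.choose m)
      = (a * c) ^ m * (a * d + b) ^ (n - m) * n.choose m := by
  have sum_below_m : ∑ k ∈ range m,
      a ^ k * b ^ (n - k) * n.choose k * (c ^ m * d ^ (k - m) * k.choose m) = 0 :=
    sum_eq_zero fun k hk => by simp [Nat.choose_eq_zero_of_lt (mem_range.mp hk)]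
  rw [← sum_range_add_sum_Ico _ (by omega : m ≤ n + 1), sum_below_m, zero_add,
    sum_Ico_eq_sum_range, add_pow, mul_sum, sum_mul]
  refine sum_congr (by congr 1; omega) fun j _ => ?_
  have choose_eq : (n.choose (m + j) * (m + j).choose m : R) = n.choose m * (n - m).choose j := by
    rw [← Nat.cast_mul, ← Nat.cast_mul, Nat.choose_mul (Nat.le_add_right m j),
      Nat.add_sub_cancel_left]
  rw [Nat.add_sub_cancel_left, show n - (m + j) = n - m - j by omega]
  calc
    _ = a ^ (m + j) * b ^ (n - m - j) * c ^ m * d ^ j *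
          (n.choose (m + j) * (m + j).choose m : R) := by ring
    _ = _ := by rw [choose_eq]; ring

theorem ENNReal.mul_one_sub_add_one_sub {p q : ℝ≥0∞} (hp : p ≤ 1) (hq : q ≤ 1) :
    p * (1 - q) + (1 - p) = 1 - p * q := by
  rw [ENNReal.mul_sub fun _ _ => ne_top_of_le_ne_top ENNReal.one_ne_top hp, mul_one, add_comm]
  exact tsub_add_tsub_cancel hp (mul_le_of_le_one_right' hq)

namespace PMF

-- No case split on `i ≤ k` is needed in the formula: for `i > k` the factor `k.choose i` is `0`.
theorem map_castLE_binomial_apply (q : NNReal) (hq : q ≤ 1) {k n : ℕ} (h : k + 1 ≤ n + 1)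
    (i : Fin (n + 1)) :
    (binomial q hq k).map (Fin.castLE h) i = q ^ (i : ℕ) * (1 - q) ^ (k - i) * k.choose i := by
  rw [map_apply, tsum_fintype]
  by_cases hik : (i : ℕ) ≤ k
  · rw [Fintype.sum_eq_single ⟨i, Nat.lt_succ_of_le hik⟩,
      if_pos (Fin.ext rfl : i = Fin.castLE h _), binomial_apply, Fin.val_last]
    exact fun j hj => if_neg fun (hij : i = Fin.castLE h j) =>
      hj (Fin.ext (congrArg Fin.val hij).symm)
  · rw [Nat.choose_eq_zero_of_lt (not_le.mp hik), Nat.cast_zero, mul_zero]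
    exact Finset.sum_eq_zero fun j _ => if_neg fun hij => hik (by rw [hij]; exact Fin.is_le j)

theorem binomial_bind_binomial (p q : NNReal) (hp : p ≤ 1) (hq : q ≤ 1) (n : ℕ) :
    (binomial p hp n).bind (fun k => (binomial q hq k).map (Fin.castLE (Nat.succ_le_succ k.is_le)))
      = binomial (p * q) (mul_le_one' hp hq) n := by
  ext i
  rw [bind_apply, tsum_fintype]
  simp only [binomial_apply, map_castLE_binomial_apply, Fin.val_last]
  rw [Fin.sum_univ_eq_sum_range (fun k => ((p : ℝ≥0∞) ^ k * (1 - p) ^ (n - k) * n.choose k) *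
      (q ^ (i : ℕ) * (1 - q) ^ (k - i) * k.choose i)) (n + 1),
    ENNReal.coe_mul, ← ENNReal.mul_one_sub_add_one_sub (ENNReal.coe_le_one_iff.mpr hp)
      (ENNReal.coe_le_one_iff.mpr hq),
    ← sum_pow_mul_pow_mul_choose_mul_pow_mul_pow_mul_choose _ _ _ _ i.is_le]

end PMF

/-- Theorem 1 on doubly stochastic binomial processes: sampling `F ∼ Binomial(n, p)`
and then `G | F ∼ Binomial(F, q)` yields `G ∼ Binomial(n, p·q)`.  The inner binomial
on `Fin (F+1)` is embedded into `Fin (n+1)` via `Fin.castLE`. -/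
theorem stmt_8 (n : ℕ) (p q : ℝ≥0∞) (hp : p ≤ 1) (hq : q ≤ 1) :
    (PMF.binomial p.toNNReal (by simpa using ENNReal.toNNReal_mono ENNReal.one_ne_top hp) n).bind
      (fun k => (PMF.binomial q.toNNReal (by simpa using ENNReal.toNNReal_mono ENNReal.one_ne_top hq) (k : ℕ)).map (Fin.castLE (Nat.succ_le_succ k.is_le))) =
    PMF.binomial (p * q).toNNReal (by simpa using ENNReal.toNNReal_mono ENNReal.one_ne_top (mul_le_one' hp hq)) n := by
  convert PMF.binomial_bind_binomial p.toNNReal q.toNNReal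
    (by simpa using ENNReal.toNNReal_mono ENNReal.one_ne_top hp)
    (by simpa using ENNReal.toNNReal_mono ENNReal.one_ne_top hq) n using 2
  exact ENNReal.toNNReal_mul
end

section
/- Let x₀ > 0, x₁ > 0 and C_A > 0 be real constants and set x₂ = exp(−x₀·C_A). Then there exists a unique real number C* with 0 < C* < C_A such that x₁·C* = 1 − x₂·exp(x₀·C*). (Existence and uniqueness of the equilibrium concentration of excited state-A molecules at the receiver, whose closed form is given via the Lambert W function in Proposition 2 of the paper.) -/
/-- Existence and uniqueness of the equilibrium concentration of excited state-A
molecules at the receiver (Proposition 2). -/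
theorem stmt_15 (x₀ x₁ CA : ℝ) (hx₀ : 0 < x₀) (hx₁ : 0 < x₁) (hCA : 0 < CA)
    (x₂ : ℝ) (hx₂ : x₂ = Real.exp (-(x₀ * CA))) :
    ∃! c : ℝ, 0 < c ∧ c < CA ∧ x₁ * c = 1 - x₂ * Real.exp (x₀ * c) := by
  have hx₂pos : 0 < x₂ := hx₂ ▸ Real.exp_pos _
  set g : ℝ → ℝ := fun c => x₁ * c + x₂ * Real.exp (x₀ * c) with hg
  have hmono : StrictMono g := by
    have h1 : StrictMono fun c : ℝ => x₁ * c := fun a b h => by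
      dsimp; nlinarith
    have h2 : StrictMono fun c : ℝ => x₂ * Real.exp (x₀ * c) := fun a b h => by
      dsimp
      have : Real.exp (x₀ * a) < Real.exp (x₀ * b) := by
        apply Real.exp_lt_exp.2; nlinarith
      nlinarith
    exact h1.add h2
  have hcont : Continuous g := by
    continuity
  have hg0 : g 0 < 1 := by
    simp only [hg, mul_zero, Real.exp_zero, mul_one, add_zero, zero_add]
    rw [hx₂]
    have := Real.exp_lt_one_iff.2 (by nlinarith : -(x₀ * CA) < 0)
    linarith
  have hgCA : 1 < g CA := by
    simp only [hg]
    rw [hx₂, ← Real.exp_add]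
    simp only [neg_add_cancel, Real.exp_zero]
    nlinarith
  have ⟨c, hc, hgc⟩ : ∃ c ∈ Set.Ioo 0 CA, g c = 1 := by
    have := intermediate_value_Ioo (le_of_lt hCA) hcont.continuousOn
      (a := 0) (b := CA) (Set.mem_Ioo.2 ⟨hg0, hgCA⟩)
    exact this
  refine ⟨c, ⟨hc.1, hc.2, by simp only [hg] at hgc; linarith⟩, ?_⟩
  rintro y ⟨hy0, hyCA, hy⟩
  have : g y = g c := by
    have hgc2 : x₁ * c + x₂ * Real.exp (x₀ * c) = 1 := hgc; simp only [hg]; linarith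
  exact hmono.injective this
end
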